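/- arXiv:2511.17213 — 3 statements merged into one kernel-verified Lean document; each statement's English description precedes it below -/
import Mathlib

section
/- For each nonnegative integer n, let P(n) denote the number of triples (d₀,d₁,d₂) of nonnegative integers with d₀ ≥ d₁ ≥ d₂, d₀ + d₁ + d₂ = n, and d₀ ≡ d₁ ≡ d₂ (mod 2). Then the generating function identity ∑_{n≥0} P(n) qⁿ = 1/((1−q²)(1−q³)(1−q⁴)) holds as an identity of formal power series over ℚ. -/
/-- `alcuinP n` is the number of triples `(d₀,d₁,d₂)` of nonnegative integers with
`d₀ ≥ d₁ ≥ d₂`, `d₀ + d₁ + d₂ = n`, and `d₀ ≡ d₁ ≡ d₂ (mod 2)`. -/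
def alcuinP (n : ℕ) : ℕ :=
  ((Finset.range (n + 1) ×ˢ Finset.range (n + 1) ×ˢ Finset.range (n + 1)).filter
    (fun t : ℕ × ℕ × ℕ =>
      t.2.1 ≤ t.1 ∧ t.2.2 ≤ t.2.1 ∧ t.1 + t.2.1 + t.2.2 = n ∧
        t.1 % 2 = t.2.1 % 2 ∧ t.2.1 % 2 = t.2.2 % 2)).card

namespace AlcuinAux

open Finset PowerSeries

/-- Number of solutions of `4c = n`. -/
def Qc (n : ℕ) : ℕ := if 4 ∣ n then 1 else 0

/-- Number of solutions of `3b + 4c = n`. -/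
def Qb (n : ℕ) : ℕ :=
  ((range (n+1) ×ˢ range (n+1)).filter (fun p : ℕ × ℕ => 3*p.1 + 4*p.2 = n)).card

/-- Number of solutions of `2a + 3b + 4c = n`. -/
def Qa (n : ℕ) : ℕ :=
  ((range (n+1) ×ˢ range (n+1) ×ˢ range (n+1)).filter
    (fun t : ℕ × ℕ × ℕ => 2*t.1 + 3*t.2.1 + 4*t.2.2 = n)).card

lemma Qc_rec (n : ℕ) : Qc n = (if n = 0 then 1 else 0) + (if 4 ≤ n then Qc (n-4) else 0) := by
  simp only [Qc]
  split_ifs <;> omega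

lemma Qb_rec (n : ℕ) : Qb n = Qc n + (if 3 ≤ n then Qb (n-3) else 0) := by
  classical
  rw [Qb, ← Finset.card_filter_add_card_filter_not (p := fun p : ℕ × ℕ => p.1 = 0)]
  congr 1
  · by_cases h : 4 ∣ n
    · have hset : (((range (n+1) ×ˢ range (n+1)).filter
          (fun p : ℕ × ℕ => 3*p.1 + 4*p.2 = n)).filter (fun p : ℕ × ℕ => p.1 = 0))
          = {(0, n / 4)} := by
        ext ⟨a, b⟩
        simp only [Finset.mem_filter, Finset.mem_product, Finset.mem_range,
          Finset.mem_singleton, Prod.mk.injEq]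
        omega
      rw [hset, Qc, if_pos h]
      simp
    · have hset : (((range (n+1) ×ˢ range (n+1)).filter
          (fun p : ℕ × ℕ => 3*p.1 + 4*p.2 = n)).filter (fun p : ℕ × ℕ => p.1 = 0))
          = ∅ := by
        ext ⟨a, b⟩
        simp only [Finset.mem_filter, Finset.mem_product, Finset.mem_range,
          Finset.notMem_empty, iff_false]
        omega
      rw [hset, Qc, if_neg h]
      simp
  · by_cases hn : 3 ≤ n
    · rw [if_pos hn, Qb]
      apply Finset.card_bij' (fun (p : ℕ × ℕ) _ => (p.1 - 1, p.2))
        (fun (p : ℕ × ℕ) _ => (p.1 + 1, p.2))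
      · intro ⟨a, b⟩ ha
        simp only [Finset.mem_filter, Finset.mem_product, Finset.mem_range, and_true, true_and] at ha ⊢
        omega
      · intro ⟨a, b⟩ ha
        simp only [Finset.mem_filter, Finset.mem_product, Finset.mem_range, and_true, true_and] at ha ⊢
        omega
      · intro ⟨a, b⟩ ha
        simp only [Finset.mem_filter, Finset.mem_product, Finset.mem_range, and_true, true_and] at ha
        simp only [Prod.mk.injEq, and_true, true_and]
        omega
      · intro ⟨a, b⟩ ha
        simp
    · rw [if_neg hn, Finset.card_eq_zero]
      ext ⟨a, b⟩
      simp only [Finset.mem_filter, Finset.mem_product, Finset.mem_range,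
        Finset.notMem_empty, iff_false]
      omega

lemma Qa_rec (n : ℕ) : Qa n = Qb n + (if 2 ≤ n then Qa (n-2) else 0) := by
  classical
  rw [Qa, ← Finset.card_filter_add_card_filter_not (p := fun t : ℕ × ℕ × ℕ => t.1 = 0)]
  congr 1
  · rw [Qb]
    apply Finset.card_bij' (fun (t : ℕ × ℕ × ℕ) _ => (t.2.1, t.2.2))
      (fun (p : ℕ × ℕ) _ => ((0 : ℕ), p.1, p.2))
    · intro ⟨a, b, c⟩ ha
      simp only [Finset.mem_filter, Finset.mem_product, Finset.mem_range, and_true, true_and] at ha ⊢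
      omega
    · intro ⟨b, c⟩ hb
      simp only [Finset.mem_filter, Finset.mem_product, Finset.mem_range, and_true, true_and] at hb ⊢
      omega
    · intro ⟨a, b, c⟩ ha
      simp only [Finset.mem_filter, Finset.mem_product, Finset.mem_range, and_true, true_and] at ha
      simp only [Prod.mk.injEq, and_true, true_and]
      omega
    · intro ⟨b, c⟩ hb
      simp
  · by_cases hn : 2 ≤ n
    · rw [if_pos hn, Qa]
      apply Finset.card_bij' (fun (t : ℕ × ℕ × ℕ) _ => (t.1 - 1, t.2.1, t.2.2))
        (fun (t : ℕ × ℕ × ℕ) _ => (t.1 + 1, t.2.1, t.2.2))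
      · intro ⟨a, b, c⟩ ha
        simp only [Finset.mem_filter, Finset.mem_product, Finset.mem_range, and_true, true_and] at ha ⊢
        omega
      · intro ⟨a, b, c⟩ ha
        simp only [Finset.mem_filter, Finset.mem_product, Finset.mem_range, and_true, true_and] at ha ⊢
        omega
      · intro ⟨a, b, c⟩ ha
        simp only [Finset.mem_filter, Finset.mem_product, Finset.mem_range, and_true, true_and] at ha
        simp only [Prod.mk.injEq, and_true, true_and]
        omega
      · intro ⟨a, b, c⟩ ha
        simp
    · rw [if_neg hn, Finset.card_eq_zero]
      ext ⟨a, b, c⟩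
      simp only [Finset.mem_filter, Finset.mem_product, Finset.mem_range,
        Finset.notMem_empty, iff_false]
      omega

lemma alcuin_eq_Qa (n : ℕ) : alcuinP n = Qa n := by
  rw [alcuinP, Qa]
  apply Finset.card_bij' (fun (t : ℕ × ℕ × ℕ) _ => ((t.1 - t.2.1)/2, t.2.2, (t.2.1 - t.2.2)/2))
    (fun (t : ℕ × ℕ × ℕ) _ => (t.2.1 + 2*t.2.2 + 2*t.1, t.2.1 + 2*t.2.2, t.2.1))
  · intro ⟨a, b, c⟩ ha
    simp only [Finset.mem_filter, Finset.mem_product, Finset.mem_range] at ha ⊢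
    omega
  · intro ⟨a, b, c⟩ ha
    simp only [Finset.mem_filter, Finset.mem_product, Finset.mem_range] at ha ⊢
    omega
  · intro ⟨a, b, c⟩ ha
    simp only [Finset.mem_filter, Finset.mem_product, Finset.mem_range] at ha
    simp only [Prod.mk.injEq, and_true, true_and]
    omega
  · intro ⟨a, b, c⟩ ha
    simp only [Finset.mem_filter, Finset.mem_product, Finset.mem_range] at ha
    simp only [Prod.mk.injEq, and_true, true_and]
    omega

/-- Peeling one geometric-series factor off a counting power series. -/
lemma step (f g : ℕ → ℕ) (k : ℕ)
    (h : ∀ n, f n = g n + (if k ≤ n then f (n-k) else 0)) :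
    (PowerSeries.mk fun n => (f n : ℚ)) * (1 - PowerSeries.X ^ k) =
      PowerSeries.mk fun n => (g n : ℚ) := by
  ext n
  rw [mul_sub, mul_one, map_sub, PowerSeries.coeff_mul_X_pow', PowerSeries.coeff_mk,
    PowerSeries.coeff_mk]
  have hn := h n
  split_ifs with hk
  · rw [PowerSeries.coeff_mk]
    rw [if_pos hk] at hn
    rw [hn]
    push_cast
    ring
  · rw [if_neg hk, add_zero] at hn
    simp [hn]

end AlcuinAux

/-- **Generating function of Alcuin's sequence** (Proposition on higher degree
discriminants): `∑ P(n) qⁿ = 1/((1−q²)(1−q³)(1−q⁴))` as formal power series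
over `ℚ`, stated as `(∑ P(n) qⁿ) · (1−q²)(1−q³)(1−q⁴) = 1`. -/
theorem stmt_4 :
    (PowerSeries.mk fun n => (alcuinP n : ℚ)) *
      ((1 - PowerSeries.X ^ 2) * (1 - PowerSeries.X ^ 3) * (1 - PowerSeries.X ^ 4)) = 1 := by
  open AlcuinAux in
  have hA : (PowerSeries.mk fun n => (alcuinP n : ℚ)) =
      PowerSeries.mk fun n => (Qa n : ℚ) := by
    ext n
    simp [alcuin_eq_Qa]
  have h2 := step Qa Qb 2 Qa_rec
  have h3 := step Qb Qc 3 Qb_rec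
  have h4 := step Qc (fun n => if n = 0 then 1 else 0) 4 Qc_rec
  have hone : (PowerSeries.mk fun n => ((if n = 0 then 1 else 0 : ℕ) : ℚ)) = 1 := by
    ext n
    rw [PowerSeries.coeff_mk, PowerSeries.coeff_one]
    split_ifs <;> simp
  calc (PowerSeries.mk fun n => (alcuinP n : ℚ)) *
        ((1 - PowerSeries.X ^ 2) * (1 - PowerSeries.X ^ 3) * (1 - PowerSeries.X ^ 4))
      = (((PowerSeries.mk fun n => (Qa n : ℚ)) * (1 - PowerSeries.X ^ 2)) *
          (1 - PowerSeries.X ^ 3)) * (1 - PowerSeries.X ^ 4) := by rw [hA]; ring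
    _ = 1 := by rw [h2, h3, h4, hone]
end

section
/- Let k be a C_r field and f₁, …, f_s ∈ k[x₀,…,x_n] homogeneous polynomials, all of the same degree d > 0. If n + 1 > s·d^r, then f₁, …, f_s have a common nontrivial zero in k^{n+1}. -/
open MvPolynomial

set_option maxHeartbeats 1000000

namespace LangNagata

variable {k : Type*} [Field k]

def Aniso {ι σ : Type*} (f : ι → MvPolynomial σ k) : Prop :=
  ∀ x : σ → k, (∀ i, MvPolynomial.eval x (f i) = 0) → x = 0

def Aniso1 {σ : Type*} (Φ : MvPolynomial σ k) : Prop :=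
  ∀ x : σ → k, MvPolynomial.eval x Φ = 0 → x = 0

lemma eval_bind₁ {σ τ : Type*} (x : τ → k) (g : σ → MvPolynomial τ k)
    (φ : MvPolynomial σ k) :
    MvPolynomial.eval x (MvPolynomial.bind₁ g φ)
      = MvPolynomial.eval (fun i => MvPolynomial.eval x (g i)) φ := by
  exact MvPolynomial.eval₂Hom_bind₁ (RingHom.id k) x g φ

lemma isHomogeneous_bind₁ {σ τ : Type*} {g : σ → MvPolynomial τ k}
    {φ : MvPolynomial σ k} {m n : ℕ} (hφ : φ.IsHomogeneous m)
    (hg : ∀ i, (g i).IsHomogeneous n) :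
    (MvPolynomial.bind₁ g φ).IsHomogeneous (n * m) := by
  rw [← MvPolynomial.aeval_eq_bind₁]
  exact hφ.aeval g hg

lemma homogComp_mul_right {σ : Type*} (c q : MvPolynomial σ k) {d t : ℕ}
    (hq : q.IsHomogeneous d) (hdt : d ≤ t) :
    homogeneousComponent t (c * q) = homogeneousComponent (t - d) c * q := by
  classical
  set n := c.totalDegree with hn
  have expand : c * q = ∑ m ∈ Finset.range (n + 1), homogeneousComponent m c * q := by
    rw [← Finset.sum_mul, MvPolynomial.sum_homogeneousComponent]
  rw [expand, map_sum]
  have key : ∀ m ∈ Finset.range (n + 1),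
      homogeneousComponent t (homogeneousComponent m c * q)
        = if m = t - d then homogeneousComponent m c * q else 0 := by
    intro m _
    have hmem : (homogeneousComponent m c * q) ∈ homogeneousSubmodule σ k (m + d) :=
      (homogeneousComponent_isHomogeneous m c).mul hq
    rw [MvPolynomial.homogeneousComponent_of_mem hmem]
    have hiff : (t = m + d) ↔ (m = t - d) := by omega
    rw [if_congr hiff rfl rfl]
  rw [Finset.sum_congr rfl key, Finset.sum_ite_eq' (Finset.range (n + 1))]
  by_cases h : t - d ∈ Finset.range (n + 1)
  · simp [h]
  · have hlt : n < t - d := by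
      simp only [Finset.mem_range] at h; omega
    rw [if_neg h, MvPolynomial.homogeneousComponent_eq_zero _ _ (hn ▸ hlt), zero_mul]

lemma degree_toMultiset_card {σ : Type*} (β : σ →₀ ℕ) :
    Multiset.card (Finsupp.toMultiset β) = β.degree := by
  rw [Finsupp.card_toMultiset]
  simp [Finsupp.degree_apply, Finsupp.sum]

noncomputable def monEquivSym (a T : ℕ) :
    {β : Fin a →₀ ℕ // β.degree = T} ≃ Sym (Fin a) T where
  toFun := fun β => ⟨Finsupp.toMultiset β.1, by rw [degree_toMultiset_card, β.2]⟩
  invFun := fun s => ⟨Multiset.toFinsupp s.1, by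
    have h1 : Finsupp.toMultiset (Multiset.toFinsupp s.1) = s.1 :=
      Multiset.toFinsupp_toMultiset s.1
    have h2 := degree_toMultiset_card (Multiset.toFinsupp s.1)
    rw [h1, s.2] at h2
    exact h2.symm⟩
  left_inv := fun β => Subtype.ext (Finsupp.toMultiset_toFinsupp β.1)
  right_inv := fun s => Subtype.ext (Multiset.toFinsupp_toMultiset s.1)

noncomputable instance (a T : ℕ) : Fintype {β : Fin a →₀ ℕ // β.degree = T} :=
  Fintype.ofEquiv _ (monEquivSym a T).symm

lemma card_mon (a T : ℕ) :
    Fintype.card {β : Fin a →₀ ℕ // β.degree = T} = Nat.multichoose a T := by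
  rw [Fintype.card_congr (monEquivSym a T), Sym.card_sym_eq_multichoose,
    Fintype.card_fin]

lemma degree_embDomain {α β : Type*} (e : α ↪ β) (f : α →₀ ℕ) :
    (Finsupp.embDomain e f).degree = f.degree := by
  classical
  simp [Finsupp.degree_apply, Finsupp.support_embDomain, Finset.sum_map,
    Finsupp.embDomain_apply]

lemma card_mon_mono {a b T : ℕ} (hab : a ≤ b) :
    Fintype.card {β : Fin a →₀ ℕ // β.degree = T}
      ≤ Fintype.card {β : Fin b →₀ ℕ // β.degree = T} := by
  classical
  have emb : Fin a ↪ Fin b := Fin.castLEEmb hab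
  refine Fintype.card_le_of_injective
    (fun β => ⟨Finsupp.embDomain emb β.1, by rw [degree_embDomain, β.2]⟩) ?_
  intro β1 β2 h
  apply Subtype.ext
  have h' : Finsupp.embDomain emb β1.1 = Finsupp.embDomain emb β2.1 :=
    congrArg Subtype.val h
  ext i
  rw [← Finsupp.embDomain_apply_self emb β1.1 i, ← Finsupp.embDomain_apply_self emb β2.1 i, h']


/-! ### Tensor powers of anisotropic systems -/

lemma tensor_step {ι τ : Type*} {s N d e : ℕ}
    (f : Fin s → MvPolynomial (Fin N) k) (hf : ∀ i, (f i).IsHomogeneous d)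
    (hfa : Aniso f)
    (F : ι → MvPolynomial τ k) (hF : ∀ w, (F w).IsHomogeneous e) (hFa : Aniso F) :
    ∃ T : Fin s × ι → MvPolynomial (Fin N × τ) k,
      (∀ p, (T p).IsHomogeneous (e * d)) ∧ Aniso T := by
  classical
  refine ⟨fun p => MvPolynomial.bind₁
    (fun j => MvPolynomial.rename (Prod.mk j) (F p.2)) (f p.1), ?_, ?_⟩
  · intro p
    exact isHomogeneous_bind₁ (hf p.1) (fun j => (hF p.2).rename_isHomogeneous)
  · intro x hx
    have hy : ∀ w : ι,
        (fun j : Fin N => MvPolynomial.eval (fun v => x (j, v)) (F w)) = 0 := by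
      intro w
      apply hfa
      intro i
      have h := hx (i, w)
      rw [eval_bind₁] at h
      have hre : (fun j : Fin N =>
          MvPolynomial.eval x (MvPolynomial.rename (Prod.mk j) (F w)))
          = fun j : Fin N => MvPolynomial.eval (fun v => x (j, v)) (F w) := by
        funext j
        rw [MvPolynomial.eval_rename]
        rfl
      rwa [hre] at h
    have hblock : ∀ j : Fin N, (fun v : τ => x (j, v)) = 0 := by
      intro j
      apply hFa
      intro w
      exact congrFun (hy w) j
    funext p
    exact congrFun (hblock p.1) p.2

lemma exists_tensor {s N d : ℕ} (f : Fin s → MvPolynomial (Fin N) k)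
    (hf : ∀ i, (f i).IsHomogeneous d) (ha : Aniso f) :
    ∀ t : ℕ, 1 ≤ t → ∃ (ι τ : Type) (_ : Fintype ι) (_ : Fintype τ),
      ∃ F : ι → MvPolynomial τ k, Fintype.card ι = s ^ t ∧ Fintype.card τ = N ^ t ∧
        (∀ i, (F i).IsHomogeneous (d ^ t)) ∧ Aniso F := by
  intro t
  induction t with
  | zero => intro h; omega
  | succ t ih =>
    intro _
    rcases Nat.eq_or_lt_of_le (Nat.one_le_iff_ne_zero.mpr (Nat.succ_ne_zero t)) with h1 | h1
    · -- t + 1 = 1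
      have ht0 : t = 0 := by omega
      subst ht0
      refine ⟨Fin s, Fin N, inferInstance, inferInstance, f, ?_, ?_, ?_, ha⟩
      · simp
      · simp
      · intro i; simpa using hf i
    · have ht1 : 1 ≤ t := by omega
      obtain ⟨ι, τ, _, _, F, hcι, hcτ, hFh, hFa⟩ := ih ht1
      obtain ⟨T, hTh, hTa⟩ := tensor_step f hf ha F hFh hFa
      refine ⟨Fin s × ι, Fin N × τ, inferInstance, inferInstance, T, ?_, ?_, ?_, hTa⟩
      · rw [Fintype.card_prod, Fintype.card_fin, hcι, pow_succ]; ring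
      · rw [Fintype.card_prod, Fintype.card_fin, hcτ, pow_succ]; ring
      · intro i
        have := hTh i
        rwa [← pow_succ] at this

/-! ### Collapsing a system to a single form -/

lemma collapse {v e1 : ℕ} (Φ : MvPolynomial (Fin v) k) (hv : 2 ≤ v)
    (hΦ : Φ.IsHomogeneous e1) (hΦa : Aniso1 Φ) :
    ∀ (L : ℕ) (ι τ : Type) (_ : Fintype ι) (D : ℕ) (F : ι → MvPolynomial τ k),
      (∀ i, (F i).IsHomogeneous D) → Fintype.card ι ≤ v ^ L →
      ∃ G : MvPolynomial τ k, G.IsHomogeneous (D * e1 ^ L) ∧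
        ∀ x : τ → k, MvPolynomial.eval x G = 0 →
          ∀ i, MvPolynomial.eval x (F i) = 0 := by
  intro L
  induction L with
  | zero =>
    intro ι τ _ D F hF hcard
    rcases isEmpty_or_nonempty ι with h | h
    · exact ⟨0, by simpa using MvPolynomial.isHomogeneous_zero τ k _,
        fun x hx i => (h.false i).elim⟩
    · have hsub : Subsingleton ι := by
        rw [← Fintype.card_le_one_iff_subsingleton]
        simpa using hcard
      obtain ⟨i0⟩ := h
      refine ⟨F i0, by simpa using hF i0, fun x hx i => ?_⟩
      rw [Subsingleton.elim i i0]
      simpa using hx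
  | succ L ih =>
    intro ι τ _ D F hF hcard
    classical
    set E := Fintype.equivFin ι with hE
    have hv0 : 0 < v := by omega
    have hcls : ∀ c : Fin v,
        Fintype.card {i : ι // (E i : ℕ) % v = (c : ℕ)} ≤ v ^ L := by
      intro c
      have hlt : ∀ i : {i : ι // (E i : ℕ) % v = (c : ℕ)},
          (E i.1 : ℕ) / v < v ^ L := by
        intro i
        have h1 : (E i.1 : ℕ) < v ^ (L + 1) :=
          lt_of_lt_of_le (E i.1).2 (by simpa using hcard)
        rw [pow_succ'] at h1
        exact Nat.div_lt_of_lt_mul h1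
      rw [← Fintype.card_fin (v ^ L)]
      refine Fintype.card_le_of_injective
        (fun i => (⟨(E i.1 : ℕ) / v, hlt i⟩ : Fin (v ^ L))) ?_
      intro i1 i2 h12
      have hq : (E i1.1 : ℕ) / v = (E i2.1 : ℕ) / v := by
        simpa using congrArg (fun z : Fin (v ^ L) => (z : ℕ)) h12
      have hr : (E i1.1 : ℕ) % v = (E i2.1 : ℕ) % v := by
        rw [i1.2, i2.2]
      have ha1 := Nat.div_add_mod (E i1.1 : ℕ) v
      have ha2 := Nat.div_add_mod (E i2.1 : ℕ) v
      have hEq : (E i1.1 : ℕ) = (E i2.1 : ℕ) := by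
        rw [← ha1, ← ha2, hq, hr]
      exact Subtype.ext (E.injective (Fin.ext hEq))
    have hstep : ∀ c : Fin v, ∃ G : MvPolynomial τ k,
        G.IsHomogeneous (D * e1 ^ L) ∧
        ∀ x : τ → k, MvPolynomial.eval x G = 0 →
          ∀ i : {i : ι // (E i : ℕ) % v = (c : ℕ)},
            MvPolynomial.eval x (F i.1) = 0 := by
      intro c
      exact ih {i : ι // (E i : ℕ) % v = (c : ℕ)} τ inferInstance D
        (fun i => F i.1) (fun i => hF i.1) (hcls c)
    choose G hG1 hG2 using hstep
    refine ⟨MvPolynomial.bind₁ G Φ, ?_, ?_⟩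
    · have := isHomogeneous_bind₁ hΦ hG1
      have heq : D * e1 ^ L * e1 = D * e1 ^ (L + 1) := by rw [pow_succ]; ring
      rwa [heq] at this
    · intro x hx i
      rw [eval_bind₁] at hx
      have hvec := hΦa _ hx
      have hcv : (E i : ℕ) % v < v := Nat.mod_lt _ hv0
      exact hG2 ⟨(E i : ℕ) % v, hcv⟩ x (congrFun hvec ⟨(E i : ℕ) % v, hcv⟩)
        ⟨i, rfl⟩


/-! ### The numeric descent -/

/-- `k` satisfies the `C_ρ` bound on anisotropic forms. -/
def CrBound (k : Type*) [Field k] (ρ : ℝ) : Prop :=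
  ∀ (m e : ℕ) (Φ : MvPolynomial (Fin m) k),
    0 < e → Φ.IsHomogeneous e → Aniso1 Φ → (m : ℝ) ≤ (e : ℝ) ^ ρ

lemma crBound_apply {ρ : ℝ} (hP : CrBound k ρ) {τ : Type} [Fintype τ] {e : ℕ}
    (Φ : MvPolynomial τ k) (he : 0 < e) (hh : Φ.IsHomogeneous e) (ha : Aniso1 Φ) :
    (Fintype.card τ : ℝ) ≤ (e : ℝ) ^ ρ := by
  classical
  set E := Fintype.equivFin τ
  have hh' : (MvPolynomial.rename E Φ).IsHomogeneous e := hh.rename_isHomogeneous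
  have ha' : Aniso1 (MvPolynomial.rename E Φ) := by
    intro x hx
    rw [MvPolynomial.eval_rename] at hx
    have h0 := ha _ hx
    funext j
    have h1 := congrFun h0 (E.symm j)
    simpa using h1
  exact hP _ e _ he hh' ha'

lemma crBound_mono {ρ ρ' : ℝ} (hρ : ρ ≤ ρ') (hP : CrBound k ρ) :
    CrBound k ρ' := by
  intro m e Φ he hh ha
  refine (hP m e Φ he hh ha).trans (Real.rpow_le_rpow_of_exponent_le ?_ hρ)
  exact_mod_cast he

lemma crBound_step {s N d : ℕ} {r ρ : ℝ}
    (f : Fin s → MvPolynomial (Fin N) k) (hf : ∀ i, (f i).IsHomogeneous d)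
    (ha : Aniso f) (hs : 2 ≤ s) (hd : 0 < d)
    (hρ0 : 0 ≤ ρ) (hρr : ρ ≤ r) (hr0 : 0 ≤ r)
    (hcount : (s : ℝ) * (d : ℝ) ^ r < (N : ℝ))
    (hP : CrBound k ρ) :
    CrBound k (ρ * (Real.log s / (Real.log N - r * Real.log d))) := by
  classical
  -- basic positivity facts
  have hd1 : (1 : ℝ) ≤ (d : ℝ) := by exact_mod_cast hd
  have hdr1 : (1 : ℝ) ≤ (d : ℝ) ^ r := Real.one_le_rpow hd1 hr0
  have hs2 : (2 : ℝ) ≤ (s : ℝ) := by exact_mod_cast hs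
  have hsN : (s : ℝ) < (N : ℝ) := by nlinarith
  have hN2 : (2 : ℝ) < (N : ℝ) := lt_of_le_of_lt hs2 hsN
  have hlogs_pos : 0 < Real.log s := Real.log_pos (by linarith)
  have hlogN_pos : 0 < Real.log N := Real.log_pos (by linarith)
  have hlogd_nonneg : 0 ≤ Real.log d := Real.log_nonneg hd1
  have hgap : Real.log s + r * Real.log d < Real.log N := by
    have h1 : Real.log ((s : ℝ) * (d : ℝ) ^ r) < Real.log N :=
      Real.log_lt_log (by positivity) hcount
    rwa [Real.log_mul (by positivity) (by positivity),
      Real.log_rpow (by linarith)] at h1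
  have hdenom_r : 0 < Real.log N - r * Real.log d := by linarith
  have hdenom_ρ : 0 < Real.log N - ρ * Real.log d := by nlinarith
  set c0 : ℝ := Real.log s / (Real.log N - r * Real.log d) with hc0
  have hc0_pos : 0 < c0 := div_pos hlogs_pos hdenom_r
  -- now prove the bound
  intro m e' Φ' he' hΦ'h hΦ'a
  have he'1 : (1 : ℝ) ≤ (e' : ℝ) := by exact_mod_cast he'
  have hloge'_nonneg : 0 ≤ Real.log e' := Real.log_nonneg he'1
  rcases le_or_gt m 1 with hm1 | hm1
  · have : (m : ℝ) ≤ 1 := by exact_mod_cast hm1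
    exact this.trans (Real.one_le_rpow he'1 (by positivity))
  · -- m ≥ 2
    have hm2 : 2 ≤ m := hm1
    have hm2' : (2 : ℝ) ≤ (m : ℝ) := by exact_mod_cast hm2
    have hlogm_pos : 0 < Real.log m := Real.log_pos (by linarith)
    -- the key inequality for every t ≥ 1
    set A : ℝ := Real.log m * (Real.log N - ρ * Real.log d)
      - ρ * Real.log e' * Real.log s with hA
    set B : ℝ := ρ * Real.log e' * Real.log m with hB
    have hB0 : 0 ≤ B := by rw [hB]; positivity
    have key : ∀ t : ℕ, 1 ≤ t → (t : ℝ) * A ≤ B := by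
      intro t ht
      obtain ⟨ι, τ, _, _, F, hcι, hcτ, hFh, hFa⟩ := exists_tensor f hf ha t ht
      set L : ℕ := ⌈(t : ℝ) * (Real.log s / Real.log m)⌉₊ with hL
      have hLval : (t : ℝ) * (Real.log s / Real.log m) ≤ (L : ℝ) := Nat.le_ceil _
      have hLub : (L : ℝ) < (t : ℝ) * (Real.log s / Real.log m) + 1 :=
        Nat.ceil_lt_add_one (by positivity)
      -- s ^ t ≤ m ^ L
      have hcard : Fintype.card ι ≤ m ^ L := by
        rw [hcι]
        have hR : ((s : ℝ)) ^ t ≤ ((m : ℝ)) ^ L := by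
          rw [← Real.log_le_log_iff (by positivity) (by positivity),
            Real.log_pow, Real.log_pow]
          calc (t : ℝ) * Real.log s
              = ((t : ℝ) * (Real.log s / Real.log m)) * Real.log m := by
                field_simp
            _ ≤ (L : ℝ) * Real.log m := by
                exact mul_le_mul_of_nonneg_right hLval hlogm_pos.le
        exact_mod_cast hR
      obtain ⟨G, hGh, hGz⟩ := collapse Φ' hm2 hΦ'h hΦ'a L ι τ inferInstance
        (d ^ t) F hFh hcard
      have hGa : Aniso1 G := by
        intro x hx
        exact hFa x (hGz x hx)
      have hdeg_pos : 0 < d ^ t * e' ^ L := by positivity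
      have hbound := crBound_apply hP G hdeg_pos hGh hGa
      rw [hcτ] at hbound
      -- take logs
      have hcast : ((N : ℝ)) ^ t ≤ ((d : ℝ) ^ t * (e' : ℝ) ^ L) ^ ρ := by
        have h9 : ((N ^ t : ℕ) : ℝ) ≤ (((d ^ t * e' ^ L : ℕ)) : ℝ) ^ ρ := hbound
        push_cast at h9
        exact h9
      have hNt_pos : (0 : ℝ) < (N : ℝ) ^ t := by positivity
      have hde_pos : (0 : ℝ) < (d : ℝ) ^ t * (e' : ℝ) ^ L := by positivity
      have hlog1 : Real.log ((N : ℝ) ^ t)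
          ≤ Real.log (((d : ℝ) ^ t * (e' : ℝ) ^ L) ^ ρ) :=
        Real.log_le_log hNt_pos hcast
      rw [Real.log_pow, Real.log_rpow hde_pos,
        Real.log_mul (by positivity) (by positivity),
        Real.log_pow, Real.log_pow] at hlog1
      -- hlog1 : t * log N ≤ ρ * (t * log d + L * log e')
      have hstep1 : (t : ℝ) * Real.log N * Real.log m ≤
          (ρ * ((t : ℝ) * Real.log d) + ρ * ((L : ℝ) * Real.log e'))
            * Real.log m := by
        refine mul_le_mul_of_nonneg_right ?_ hlogm_pos.le
        calc (t : ℝ) * Real.log N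
            ≤ ρ * ((t : ℝ) * Real.log d + (L : ℝ) * Real.log e') := hlog1
          _ = ρ * ((t : ℝ) * Real.log d) + ρ * ((L : ℝ) * Real.log e') := by
              ring
      have h3 : ((t : ℝ) * (Real.log s / Real.log m)) * Real.log m
          = (t : ℝ) * Real.log s := by
        field_simp
      have hstep2 : (L : ℝ) * Real.log m ≤ (t : ℝ) * Real.log s + Real.log m := by
        have h5 := mul_le_mul_of_nonneg_right hLub.le hlogm_pos.le
        rw [add_mul, one_mul, h3] at h5
        exact h5
      have hstep3 : ρ * ((L : ℝ) * Real.log e') * Real.log m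
          ≤ ρ * Real.log e' * ((t : ℝ) * Real.log s + Real.log m) := by
        have hcoef : 0 ≤ ρ * Real.log e' := by positivity
        calc ρ * ((L : ℝ) * Real.log e') * Real.log m
            = (ρ * Real.log e') * ((L : ℝ) * Real.log m) := by ring
          _ ≤ (ρ * Real.log e') * ((t : ℝ) * Real.log s + Real.log m) :=
              mul_le_mul_of_nonneg_left hstep2 hcoef
      rw [hA, hB]
      ring_nf at hstep1 hstep3 ⊢
      linarith
    have hA0 : A ≤ 0 := by
      by_contra hA'
      push_neg at hA'
      obtain ⟨t, ht⟩ := exists_nat_gt (max 1 (B / A))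
      have ht1 : 1 ≤ t := by
        have h6 : (1 : ℝ) ≤ max 1 (B / A) := le_max_left _ _
        have h7 : (1 : ℝ) < (t : ℝ) := lt_of_le_of_lt h6 ht
        exact_mod_cast h7.le
      have htBA : B / A < (t : ℝ) := lt_of_le_of_lt (le_max_right _ _) ht
      have h8 : B < (t : ℝ) * A := by
        rwa [div_lt_iff₀ hA'] at htBA
      exact absurd (key t ht1) (by linarith)
    -- conclude
    rw [Real.le_rpow_iff_log_le (by linarith : (0:ℝ) < (m:ℝ)) (by linarith)]
    have hfrac : Real.log m * (Real.log N - ρ * Real.log d)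
        ≤ ρ * Real.log e' * Real.log s := by
      have := hA0
      rw [hA] at this
      linarith
    have h4 : Real.log m ≤ ρ * Real.log e' * Real.log s
        / (Real.log N - ρ * Real.log d) := by
      rw [le_div_iff₀ hdenom_ρ]
      linarith [hfrac]
    have h5 : ρ * Real.log e' * Real.log s / (Real.log N - ρ * Real.log d)
        ≤ ρ * Real.log e' * Real.log s / (Real.log N - r * Real.log d) := by
      apply div_le_div_of_nonneg_left ?_ hdenom_r ?_
      · positivity
      · nlinarith
    calc Real.log m ≤ ρ * Real.log e' * Real.log s
          / (Real.log N - r * Real.log d) := h4.trans h5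
      _ = ρ * c0 * Real.log e' := by rw [hc0]; ring

/-- Main contradiction in the anisotropic-witness case. -/
lemma aniso_case {s N d : ℕ} {r : ℝ} (hr : 0 ≤ r)
    (f : Fin s → MvPolynomial (Fin N) k) (hf : ∀ i, (f i).IsHomogeneous d)
    (ha : Aniso f) (hs : 2 ≤ s) (hd : 0 < d)
    (hcount : (s : ℝ) * (d : ℝ) ^ r < (N : ℝ))
    (hP : CrBound k r)
    (v e : ℕ) (Φ : MvPolynomial (Fin v) k) (hv : 2 ≤ v) (he : 0 < e)
    (hΦ : Φ.IsHomogeneous e) (hΦa : Aniso1 Φ) : False := by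
  classical
  have hd1 : (1 : ℝ) ≤ (d : ℝ) := by exact_mod_cast hd
  have hdr1 : (1 : ℝ) ≤ (d : ℝ) ^ r := Real.one_le_rpow hd1 hr
  have hs2 : (2 : ℝ) ≤ (s : ℝ) := by exact_mod_cast hs
  have hsN : (s : ℝ) < (N : ℝ) := by nlinarith
  have hN2 : (2 : ℝ) < (N : ℝ) := lt_of_le_of_lt hs2 hsN
  have hlogs_pos : 0 < Real.log s := Real.log_pos (by linarith)
  have hlogN_pos : 0 < Real.log N := Real.log_pos (by linarith)
  have hlogd_nonneg : 0 ≤ Real.log d := Real.log_nonneg hd1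
  have hgap : Real.log s + r * Real.log d < Real.log N := by
    have h1 : Real.log ((s : ℝ) * (d : ℝ) ^ r) < Real.log N :=
      Real.log_lt_log (by positivity) hcount
    rwa [Real.log_mul (by positivity) (by positivity),
      Real.log_rpow (by linarith)] at h1
  have hdenom_r : 0 < Real.log N - r * Real.log d := by linarith
  set c0 : ℝ := Real.log s / (Real.log N - r * Real.log d) with hc0
  have hc0_pos : 0 < c0 := div_pos hlogs_pos hdenom_r
  have hc0_lt1 : c0 < 1 := by
    rw [hc0, div_lt_one hdenom_r]
    linarith
  -- descent
  have key : ∀ j : ℕ, CrBound k (r * c0 ^ j) := by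
    intro j
    induction j with
    | zero => simpa using hP
    | succ j ih =>
      have h0 : 0 ≤ r * c0 ^ j := by positivity
      have h1 : r * c0 ^ j ≤ r := by
        have : c0 ^ j ≤ 1 := pow_le_one₀ hc0_pos.le hc0_lt1.le
        nlinarith
      have hstep := crBound_step f hf ha hs hd h0 h1 hr hcount ih
      have heq : r * c0 ^ j * c0 = r * c0 ^ (j + 1) := by ring
      rwa [heq] at hstep
  -- contradiction with the witness
  have hwit : ∀ j : ℕ, (v : ℝ) ≤ (e : ℝ) ^ (r * c0 ^ j) := fun j =>
    key j v e Φ he hΦ hΦa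
  have hv2 : (2 : ℝ) ≤ (v : ℝ) := by exact_mod_cast hv
  have he1 : (1 : ℝ) ≤ (e : ℝ) := by exact_mod_cast he
  -- choose j with (r * c0 ^ j) * log e < log 2
  have hlog2 : 0 < Real.log 2 := Real.log_pos (by norm_num)
  rcases eq_or_lt_of_le (mul_nonneg hr (Real.log_nonneg he1)) with hre | hre
  · -- r * log e = 0 : already j = 0 gives contradiction
    have h0 := hwit 0
    have : (e : ℝ) ^ (r * c0 ^ 0) = Real.exp ((r * c0 ^ 0) * Real.log e) := by
      rw [Real.rpow_def_of_pos (by linarith)]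
      ring_nf
    rw [this] at h0
    have hexp : (r * c0 ^ 0) * Real.log e = 0 := by
      simp only [pow_zero, mul_one]
      linarith [hre]
    rw [hexp, Real.exp_zero] at h0
    linarith
  · obtain ⟨j, hj⟩ := exists_pow_lt_of_lt_one
      (div_pos hlog2 hre) hc0_lt1
    have hj' : (r * c0 ^ j) * Real.log e < Real.log 2 := by
      have h9 := mul_lt_mul_of_pos_right hj hre
      rw [div_mul_cancel₀ _ (ne_of_gt hre)] at h9
      calc (r * c0 ^ j) * Real.log e = c0 ^ j * (r * Real.log e) := by ring
        _ < Real.log 2 := h9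
    have h0 := hwit j
    have hrw : (e : ℝ) ^ (r * c0 ^ j) = Real.exp ((r * c0 ^ j) * Real.log e) := by
      rw [Real.rpow_def_of_pos (by linarith)]
      ring_nf
    rw [hrw] at h0
    have : Real.exp ((r * c0 ^ j) * Real.log e) < 2 := by
      calc Real.exp ((r * c0 ^ j) * Real.log e)
          < Real.exp (Real.log 2) := Real.exp_lt_exp.mpr hj'
        _ = 2 := Real.exp_log (by norm_num)
    linarith


/-! ### `k` is algebraically closed when there is no anisotropic form -/

lemma isAlgClosed_of_no_aniso
    (H : ∀ (v e : ℕ) (Φ : MvPolynomial (Fin v) k),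
      2 ≤ v → 0 < e → Φ.IsHomogeneous e → ¬ Aniso1 Φ) :
    IsAlgClosed k := by
  apply IsAlgClosed.of_exists_root
  intro p hmonic hirr
  classical
  set e := p.natDegree with he
  have he1 : 0 < e := hirr.natDegree_pos
  set Φ : MvPolynomial (Fin 2) k := ∑ j ∈ Finset.range (e + 1),
    MvPolynomial.C (p.coeff j) * (MvPolynomial.X 0) ^ j *
      (MvPolynomial.X 1) ^ (e - j) with hΦ
  have hΦh : Φ.IsHomogeneous e := by
    rw [hΦ]
    apply MvPolynomial.IsHomogeneous.sum
    intro j hj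
    have hj' : j ≤ e := by
      simp only [Finset.mem_range] at hj; omega
    have h1 : (MvPolynomial.C (p.coeff j) * MvPolynomial.X (0 : Fin 2) ^ j *
        MvPolynomial.X (1 : Fin 2) ^ (e - j)).IsHomogeneous (0 + j + (e - j)) :=
      ((MvPolynomial.isHomogeneous_C _ _).mul
        (MvPolynomial.isHomogeneous_X_pow _ _)).mul
        (MvPolynomial.isHomogeneous_X_pow _ _)
    have h2 : 0 + j + (e - j) = e := by omega
    rwa [h2] at h1
  have hnot := H 2 e Φ le_rfl he1 hΦh
  rw [Aniso1] at hnot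
  push_neg at hnot
  obtain ⟨x, hx0, hxne⟩ := hnot
  set a := x 0 with hax
  set b := x 1 with hbx
  have heval : ∑ j ∈ Finset.range (e + 1), p.coeff j * a ^ j * b ^ (e - j) = 0 := by
    have h3 := hx0
    rw [hΦ] at h3
    simpa using h3
  by_cases hb : b = 0
  · -- only the j = e term survives: a ^ e = 0
    have hae : a ^ e = 0 := by
      have h4 : ∀ j ∈ Finset.range (e + 1),
          p.coeff j * a ^ j * b ^ (e - j) = if j = e then a ^ e else 0 := by
        intro j hj
        by_cases hje : j = e
        · subst hje
          simp [hb, Polynomial.Monic.coeff_natDegree hmonic, he]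
        · have hlt : j < e := by
            simp only [Finset.mem_range] at hj; omega
          rw [hb, zero_pow (by omega : e - j ≠ 0)]
          simp [hje]
      rw [Finset.sum_congr rfl h4, Finset.sum_ite_eq' (Finset.range (e + 1))] at heval
      simpa [Finset.mem_range] using heval
    have ha : a = 0 := by
      have := pow_eq_zero_iff (by omega : e ≠ 0) |>.mp hae
      exact this
    exfalso
    apply hxne
    funext i
    fin_cases i
    · exact ha
    · exact hb
  · -- b ≠ 0 : a / b is a root of p
    refine ⟨a / b, ?_⟩
    have hkey : b ^ e * Polynomial.eval (a / b) p = 0 := by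
      rw [Polynomial.eval_eq_sum_range, ← he, Finset.mul_sum]
      rw [← heval]
      apply Finset.sum_congr rfl
      intro j hj
      have hj' : j ≤ e := by
        simp only [Finset.mem_range] at hj; omega
      have hbe : b ^ e = b ^ (e - j) * b ^ j := by
        rw [← pow_add]
        congr 1
        omega
      rw [div_pow, hbe]
      field_simp
    have hbe : b ^ e ≠ 0 := pow_ne_zero _ hb
    exact (mul_eq_zero.mp hkey).resolve_left hbe


/-! ### The algebraically closed case -/

lemma degree_add' {σ : Type*} (a b : σ →₀ ℕ) :
    (a + b).degree = a.degree + b.degree := by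
  simp only [Finsupp.degree_eq_weight_one, map_add]

lemma degree_single' {σ : Type*} (i : σ) (m : ℕ) :
    (Finsupp.single i m).degree = m := by
  classical
  rcases eq_or_ne m 0 with rfl | hm
  · simp [map_zero]
  · rw [Finsupp.degree_apply, Finsupp.support_single_ne_zero _ hm,
      Finset.sum_singleton, Finsupp.single_eq_same]

noncomputable instance bddFintype (N T₀ : ℕ) :
    Fintype {b : Fin N →₀ ℕ // b.degree < T₀} :=
  Fintype.ofInjective
    (fun b => (⟨⟨b.1.degree, b.2⟩, ⟨b.1, rfl⟩⟩ :
      Σ t : Fin T₀, {c : Fin N →₀ ℕ // c.degree = (t : ℕ)}))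
    (fun b1 b2 h => Subtype.ext (congrArg (fun p => (p.2.1 : Fin N →₀ ℕ)) h))

lemma algclosed_case [IsAlgClosed k] {s N d : ℕ} (hd : 0 < d) (hs : 0 < s)
    (hsN : s < N) (f : Fin s → MvPolynomial (Fin N) k)
    (hf : ∀ i, (f i).IsHomogeneous d) (ha : Aniso f) : False := by
  classical
  set I : Ideal (MvPolynomial (Fin N) k) := Ideal.span (Set.range f) with hI
  have hrad : ∀ i : Fin N, ∃ M : ℕ,
      (MvPolynomial.X i : MvPolynomial (Fin N) k) ^ M ∈ I := by
    intro i
    have hmem : (MvPolynomial.X i : MvPolynomial (Fin N) k) ∈ I.radical := by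
      rw [← MvPolynomial.vanishingIdeal_zeroLocus_eq_radical (K := k),
        MvPolynomial.mem_vanishingIdeal_iff]
      intro x hx
      have hx0 : x = 0 := by
        apply ha
        intro j
        exact hx (f j) (Ideal.subset_span ⟨j, rfl⟩)
      rw [hx0]
      simp
    exact hmem
  choose Mi hMi using hrad
  set M : ℕ := (Finset.univ.sup Mi) + d + 1 with hMdef
  have hdM : d + 1 ≤ M := by rw [hMdef]; omega
  have hXM : ∀ i : Fin N, (MvPolynomial.X i : MvPolynomial (Fin N) k) ^ M ∈ I := by
    intro i
    have hle : Mi i ≤ M := by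
      have h0 := Finset.le_sup (f := Mi) (Finset.mem_univ i)
      omega
    have hsplit : (MvPolynomial.X i : MvPolynomial (Fin N) k) ^ M
        = MvPolynomial.X i ^ Mi i * MvPolynomial.X i ^ (M - Mi i) := by
      rw [← pow_add]
      congr 1
      omega
    rw [hsplit]
    exact Ideal.mul_mem_right _ _ (hMi i)
  set T₀ : ℕ := N * (M - 1) + 1 with hT₀
  have hN1 : 1 ≤ N := by omega
  have hMT₀ : M ≤ T₀ := by
    rw [hT₀]
    have h1 : 1 * (M - 1) ≤ N * (M - 1) := Nat.mul_le_mul_right _ hN1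
    omega
  have hdT₀ : d ≤ T₀ := by omega
  -- representation of homogeneous members of I
  have hrep : ∀ (t : ℕ) (q : MvPolynomial (Fin N) k), d ≤ t → q.IsHomogeneous t →
      q ∈ I → ∃ h : Fin s → MvPolynomial (Fin N) k,
        (∀ j, (h j).IsHomogeneous (t - d)) ∧ q = ∑ j, h j * f j := by
    intro t q hdt hq hqI
    rw [hI, Ideal.mem_span_range_iff_exists_fun] at hqI
    obtain ⟨c, hc⟩ := hqI
    refine ⟨fun j => homogeneousComponent (t - d) (c j),
      fun j => homogeneousComponent_isHomogeneous _ _, ?_⟩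
    have h1 : homogeneousComponent t q = q := by
      rw [MvPolynomial.homogeneousComponent_of_mem
        ((MvPolynomial.mem_homogeneousSubmodule _ _).mpr hq)]
      simp
    calc q = homogeneousComponent t q := h1.symm
      _ = homogeneousComponent t (∑ j, c j * f j) := by rw [hc]
      _ = ∑ j, homogeneousComponent t (c j * f j) := map_sum _ _ _
      _ = ∑ j, homogeneousComponent (t - d) (c j) * f j :=
          Finset.sum_congr rfl fun j _ => homogComp_mul_right (c j) (f j) (hf j) hdt
  -- product identity
  have hprod : ∀ (α α' : Fin s →₀ ℕ) (j : Fin s), α' = α + Finsupp.single j 1 →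
      (∏ i, f i ^ α i) * f j = ∏ i, f i ^ α' i := by
    intro α α' j hα'
    have h2 : ∀ i : Fin s, f i ^ α' i
        = f i ^ α i * (if j = i then f i else 1) := by
      intro i
      rw [hα', Finsupp.add_apply, pow_add, Finsupp.single_apply, pow_ite, pow_one,
        pow_zero]
    rw [Finset.prod_congr rfl (fun i _ => h2 i), Finset.prod_mul_distrib,
      Finset.prod_ite_eq]
    simp
  -- the generating sets
  set gen : ℕ → Set (MvPolynomial (Fin N) k) := fun t =>
    {q | ∃ (b : Fin N →₀ ℕ) (α : Fin s →₀ ℕ), b.degree < T₀ ∧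
      b.degree + d * α.degree = t ∧
      q = MvPolynomial.monomial b 1 * ∏ j, f j ^ α j} with hgen
  have hmul : ∀ (u : ℕ) (j : Fin s) (q : MvPolynomial (Fin N) k),
      q ∈ Submodule.span k (gen u) → q * f j ∈ Submodule.span k (gen (u + d)) := by
    intro u j q hq
    have hmap : Submodule.map (LinearMap.mulRight k (f j)) (Submodule.span k (gen u))
        ≤ Submodule.span k (gen (u + d)) := by
      rw [Submodule.map_span]
      apply Submodule.span_le.mpr
      rintro _ ⟨q', hq', rfl⟩
      obtain ⟨b, α, hb, hdeg, rfl⟩ := hq'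
      apply Submodule.subset_span
      refine ⟨b, α + Finsupp.single j 1, hb, ?_, ?_⟩
      · rw [degree_add', degree_single']
        have h3 : d * (α.degree + 1) = d * α.degree + d := by ring
        omega
      · simp only [LinearMap.mulRight_apply]
        rw [mul_assoc, hprod α (α + Finsupp.single j 1) j rfl]
    exact hmap (Submodule.mem_map_of_mem hq)
  -- the spanning claim
  have hspan : ∀ t : ℕ, ∀ p : MvPolynomial (Fin N) k, p.IsHomogeneous t →
      p ∈ Submodule.span k (gen t) := by
    intro t
    induction t using Nat.strong_induction_on with
    | _ t ih =>
      intro p hp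
      rw [← p.support_sum_monomial_coeff]
      apply Submodule.sum_mem
      intro β hβ
      have hβdeg : β.degree = t := by
        by_contra hne
        exact (MvPolynomial.mem_support_iff.mp hβ) (hp.coeff_eq_zero hne)
      have hsmul : MvPolynomial.monomial β (MvPolynomial.coeff β p)
          = (MvPolynomial.coeff β p) • MvPolynomial.monomial β (1 : k) := by
        rw [MvPolynomial.smul_monomial, smul_eq_mul, mul_one]
      rw [hsmul]
      apply Submodule.smul_mem
      by_cases hcase : t < T₀
      · refine Submodule.subset_span ⟨β, 0, by omega, ?_, by simp⟩
        simp [hβdeg]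
      · push_neg at hcase
        have hex : ∃ i : Fin N, M ≤ β i := by
          by_contra hno
          push_neg at hno
          have h2 : ∑ i ∈ β.support, β i ≤ ∑ i : Fin N, β i :=
            Finset.sum_le_sum_of_subset (Finset.subset_univ _)
          have h3 : ∑ i : Fin N, β i ≤ ∑ _i : Fin N, (M - 1) :=
            Finset.sum_le_sum fun i _ => by have := hno i; omega
          have h4 : ∑ _i : Fin N, (M - 1) = N * (M - 1) := by
            rw [Finset.sum_const, Finset.card_univ, Fintype.card_fin, smul_eq_mul]
          have h5 : β.degree = ∑ i ∈ β.support, β i := rfl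
          omega
        obtain ⟨i, hi⟩ := hex
        have hle : Finsupp.single i M ≤ β := Finsupp.single_le_iff.mpr hi
        set β' := β - Finsupp.single i M with hβ'
        have hadd : β' + Finsupp.single i M = β := tsub_add_cancel_of_le hle
        have hdegβ' : β'.degree + M = t := by
          have h6 := congrArg Finsupp.degree hadd
          rw [degree_add', degree_single'] at h6
          omega
        obtain ⟨h, hh, hXeq⟩ := hrep M (MvPolynomial.X i ^ M) (by omega)
          (MvPolynomial.isHomogeneous_X_pow i M) (hXM i)
        have hmoneq : MvPolynomial.monomial β (1 : k)
            = ∑ j, (MvPolynomial.monomial β' (1 : k) * h j) * f j := by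
          have h7 : MvPolynomial.monomial β (1 : k)
              = MvPolynomial.monomial β' (1 : k) * MvPolynomial.X i ^ M := by
            rw [MvPolynomial.X_pow_eq_monomial, MvPolynomial.monomial_mul, hadd,
              mul_one]
          rw [h7, hXeq, Finset.mul_sum]
          exact Finset.sum_congr rfl fun j _ => by ring
        rw [hmoneq]
        apply Submodule.sum_mem
        intro j _
        have hq : (MvPolynomial.monomial β' (1 : k) * h j).IsHomogeneous (t - d) := by
          have h8 := (MvPolynomial.isHomogeneous_monomial (1 : k)
            (rfl : β'.degree = β'.degree)).mul (hh j)
          have h9 : β'.degree + (M - d) = t - d := by omega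
          rwa [h9] at h8
        have h10 := ih (t - d) (by omega) _ hq
        have h11 := hmul (t - d) j _ h10
        have h12 : t - d + d = t := by omega
        rwa [h12] at h11
  -- counting
  set g : ℕ := Fintype.card {b : Fin N →₀ ℕ // b.degree < T₀} with hg
  set T : ℕ := g * s with hT
  set P := {p : (Fin N →₀ ℕ) × (Fin s →₀ ℕ) //
    p.1.degree < T₀ ∧ p.1.degree + d * p.2.degree = T} with hP
  have hpadmem : ∀ p : P, (p.1.2 + Finsupp.single (⟨0, hs⟩ : Fin s)
      (T - p.1.2.degree)).degree = T := by
    intro p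
    rw [degree_add', degree_single']
    have h12 := p.2.2
    have h13 : p.1.2.degree ≤ d * p.1.2.degree := Nat.le_mul_of_pos_left _ hd
    omega
  set pad : P → ({b : Fin N →₀ ℕ // b.degree < T₀} ×
      {β : Fin s →₀ ℕ // β.degree = T}) :=
    fun p => ⟨⟨p.1.1, p.2.1⟩,
      ⟨p.1.2 + Finsupp.single ⟨0, hs⟩ (T - p.1.2.degree), hpadmem p⟩⟩ with hpad
  have hpadinj : Function.Injective pad := by
    intro p1 p2 h
    have hb : p1.1.1 = p2.1.1 := congrArg (fun z => z.1.1) h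
    have hdeg : p1.1.2.degree = p2.1.2.degree := by
      have e1 := p1.2.2
      have e2 := p2.2.2
      rw [hb] at e1
      have h14 : d * p1.1.2.degree = d * p2.1.2.degree := by omega
      exact Nat.eq_of_mul_eq_mul_left hd h14
    have hα : p1.1.2 = p2.1.2 := by
      have h15 : p1.1.2 + Finsupp.single (⟨0, hs⟩ : Fin s) (T - p1.1.2.degree)
          = p2.1.2 + Finsupp.single (⟨0, hs⟩ : Fin s) (T - p2.1.2.degree) := by
        have h16 := congrArg (fun z => (z.2.1 : Fin s →₀ ℕ)) h
        exact h16
      rw [hdeg] at h15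
      exact add_right_cancel h15
    exact Subtype.ext (Prod.ext hb hα)
  haveI : Fintype P := Fintype.ofInjective pad hpadinj
  have hcardP : Fintype.card P ≤ g * Nat.multichoose s T := by
    have h15 := Fintype.card_le_of_injective pad hpadinj
    rwa [Fintype.card_prod, card_mon, ← hg] at h15
  set genFun : P → MvPolynomial (Fin N) k := fun p =>
    MvPolynomial.monomial p.1.1 1 * ∏ j, f j ^ p.1.2 j with hgenFun
  have hgenrange : gen T = Set.range genFun := by
    ext q
    constructor
    · rintro ⟨b, α, hb, hdeg, rfl⟩
      exact ⟨⟨(b, α), ⟨hb, hdeg⟩⟩, rfl⟩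
    · rintro ⟨p, rfl⟩
      exact ⟨p.1.1, p.1.2, p.2.1, p.2.2, rfl⟩
  set V := Submodule.span k (gen T) with hV
  haveI : FiniteDimensional k V := by
    rw [hV, hgenrange]
    exact FiniteDimensional.span_of_finite k (Set.finite_range genFun)
  have hfinrankV : Module.finrank k V ≤ Fintype.card P := by
    have hle : Module.finrank k (Submodule.span k (Set.range genFun))
        ≤ Fintype.card P := by
      refine (finrank_span_le_card (R := k) (Set.range genFun)).trans ?_
      rw [Set.toFinset_range]
      exact (Finset.card_image_le).trans (by simp)
    rw [hV, hgenrange]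
    exact hle
  set fam : {β : Fin N →₀ ℕ // β.degree = T} → MvPolynomial (Fin N) k :=
    fun β => MvPolynomial.monomial β.1 1 with hfam
  have hfamind : LinearIndependent k fam := by
    have h17 := (MvPolynomial.basisMonomials (Fin N) k).linearIndependent
    have h18 := h17.comp (Subtype.val : {β : Fin N →₀ ℕ // β.degree = T} → (Fin N →₀ ℕ)) Subtype.val_injective
    have h19 : fam = (MvPolynomial.basisMonomials (Fin N) k) ∘ Subtype.val := by
      funext β
      rw [hfam]
      simp [MvPolynomial.coe_basisMonomials]
    rwa [h19]
  have hfamrange : Set.range fam ⊆ (V : Set (MvPolynomial (Fin N) k)) := by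
    rintro _ ⟨β, rfl⟩
    exact hspan T _ (MvPolynomial.isHomogeneous_monomial _ β.2)
  have hlower : Fintype.card {β : Fin N →₀ ℕ // β.degree = T}
      ≤ Module.finrank k V := by
    have h19 : Submodule.span k (Set.range fam) ≤ V := Submodule.span_le.mpr hfamrange
    have h20 := finrank_span_eq_card hfamind
    have h21 := Submodule.finrank_mono h19
    omega
  have hchain : Nat.multichoose (s + 1) T ≤ g * Nat.multichoose s T := by
    calc Nat.multichoose (s + 1) T
        = Fintype.card {β : Fin (s + 1) →₀ ℕ // β.degree = T} := (card_mon _ _).symm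
      _ ≤ Fintype.card {β : Fin N →₀ ℕ // β.degree = T} := card_mon_mono (by omega)
      _ ≤ Module.finrank k V := hlower
      _ ≤ Fintype.card P := hfinrankV
      _ ≤ g * Nat.multichoose s T := hcardP
  -- final arithmetic
  rw [Nat.multichoose_eq, Nat.multichoose_eq] at hchain
  have hidx1 : s + 1 + T - 1 = s + T := by omega
  rw [hidx1] at hchain
  have hsym1 : (s + T).choose T = (s + T).choose s := by
    have h22 := Nat.choose_symm (show T ≤ s + T by omega)
    rw [show s + T - T = s by omega] at h22
    exact h22.symm
  have hsym0 : (s + T - 1).choose T = (s + T - 1).choose (s - 1) := by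
    have h23 := Nat.choose_symm (show T ≤ s + T - 1 by omega)
    rw [show s + T - 1 - T = s - 1 by omega] at h23
    exact h23.symm
  rw [hsym1, hsym0] at hchain
  have hid := Nat.add_one_mul_choose_eq (s + T - 1) (s - 1)
  rw [show s + T - 1 + 1 = s + T by omega,
    show s - 1 + 1 = s by omega] at hid
  -- hid : (s + T) * (s + T - 1).choose (s - 1) = (s + T).choose s * s
  set m0 := (s + T - 1).choose (s - 1) with hm0
  have hm0pos : 0 < m0 := Nat.choose_pos (by omega)
  have hfinal : (s + T) * m0 ≤ g * s * m0 := by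
    calc (s + T) * m0 = (s + T).choose s * s := hid
      _ ≤ (g * m0) * s := Nat.mul_le_mul_right _ hchain
      _ = g * s * m0 := by ring
  have hST : s + T ≤ g * s := Nat.le_of_mul_le_mul_right hfinal hm0pos
  omega

end LangNagata

/-- A field `k` is `C_r` (for a real `r ≥ 0`): every homogeneous polynomial of
degree `d > 0` in `n` variables over `k` with `n > d^r` has a nontrivial zero. -/
def IsCrField (r : ℝ) (k : Type*) [Field k] : Prop :=
  ∀ (n d : ℕ) (f : MvPolynomial (Fin n) k), 0 < d → f.IsHomogeneous d →
    (d : ℝ) ^ r < (n : ℝ) → ∃ x : Fin n → k, x ≠ 0 ∧ MvPolynomial.eval x f = 0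

/-- **Systems of forms over `C_r` fields** (Lang–Nagata): if `k` is `C_r` and
`f₁, …, f_s ∈ k[x₀,…,x_n]` are homogeneous of the same degree `d > 0` with
`n + 1 > s·d^r`, then they have a common nontrivial zero in `k^{n+1}`. -/
theorem stmt_13 {k : Type*} [Field k] (r : ℝ) (hr : 0 ≤ r) (hk : IsCrField r k)
    (s n d : ℕ) (hd : 0 < d) (f : Fin s → MvPolynomial (Fin (n + 1)) k)
    (hf : ∀ i, (f i).IsHomogeneous d)
    (hcount : (s : ℝ) * (d : ℝ) ^ r < ((n : ℝ) + 1)) :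
    ∃ x : Fin (n + 1) → k, x ≠ 0 ∧ ∀ i, MvPolynomial.eval x (f i) = 0 := by
  classical
  rcases Nat.eq_zero_or_pos s with rfl | hs0
  · refine ⟨fun _ => 1, ?_, fun i => i.elim0⟩
    intro h
    have h0 := congrFun h 0
    simp at h0
  by_contra hno
  push_neg at hno
  have ha : LangNagata.Aniso f := by
    intro x hx
    by_contra hx0
    obtain ⟨i, hi⟩ := hno x hx0
    exact hi (hx i)
  have hcount' : (s : ℝ) * (d : ℝ) ^ r < ((n + 1 : ℕ) : ℝ) := by
    push_cast
    exact hcount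
  rcases eq_or_lt_of_le (show 1 ≤ s from hs0) with hs1 | hs2
  · -- s = 1
    have hs1' : 1 = s := hs1
    subst hs1'
    have hc1 : (d : ℝ) ^ r < ((n + 1 : ℕ) : ℝ) := by
      have := hcount'
      rwa [Nat.cast_one, one_mul] at this
    obtain ⟨x, hx0, hx⟩ := hk (n + 1) d (f 0) hd (hf 0) hc1
    refine hx0 (ha x fun i => ?_)
    rw [Subsingleton.elim i 0]
    exact hx
  · -- s ≥ 2
    have hP : LangNagata.CrBound k r := by
      intro m e Φ he hh hA
      by_contra hlt
      push_neg at hlt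
      obtain ⟨x, hx0, hx⟩ := hk m e Φ he hh hlt
      exact hx0 (hA x hx)
    by_cases HW : ∃ (v e : ℕ) (Φ : MvPolynomial (Fin v) k),
        2 ≤ v ∧ 0 < e ∧ Φ.IsHomogeneous e ∧ LangNagata.Aniso1 Φ
    · obtain ⟨v, e, Φ, hv, he, hΦ, hΦa⟩ := HW
      exact LangNagata.aniso_case hr f hf ha (by omega) hd hcount' hP v e Φ hv he
        hΦ hΦa
    · push_neg at HW
      haveI := LangNagata.isAlgClosed_of_no_aniso
        (fun v e Φ hv he hh => HW v e Φ hv he hh)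
      have hdr1 : (1 : ℝ) ≤ (d : ℝ) ^ r :=
        Real.one_le_rpow (by exact_mod_cast hd) hr
      have hs2' : (2 : ℝ) ≤ (s : ℝ) := by exact_mod_cast hs2
      have hsltR : (s : ℝ) < ((n + 1 : ℕ) : ℝ) := by nlinarith
      have hsN : s < n + 1 := by exact_mod_cast hsltR
      exact LangNagata.algclosed_case hd hs0 hsN f hf ha
end

section
/- Let k be an infinite field and let W ⊂ P⁶ be the cubic hypersurface defined by ξ²c₂ − (b₀² − 4a₀c₀)c₂ − a₀c₁² + b₀c₁d₀ − d₀²c₀ = 0 in homogeneous coordinates (a₀, b₀, c₀, c₁, c₂, d₀, ξ). Then the point p = [1:0:0:0:0:0:0] lies on W and is a singular (double) point of W: the defining cubic has multiplicity exactly 2 at p. Consequently projection from p gives a birational map W ⇢ P⁵, so W is rational over k and its k-points are Zariski dense. -/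
/-
`cubicW = a₀ Q + R` with `Q = 4c₀c₂ - c₁²` a quadric and `R` a cubic, neither involving `a₀`.
Dehomogenising at `p` gives `Q + R`, so `p` is a double point. Solving `F = 0` for `a₀` inverts
the projection from `p` and parametrises `W`, injectively where `Q ≠ 0`. As a polynomial in `a₀`,
`F` is linear with coprime coefficients, hence irreducible. If `G'` vanishes on `W(k)`, its
pseudo-remainder modulo `F` vanishes wherever `Q ≠ 0`, hence everywhere since `k` is infinite;
so `F ∣ Q ^ N G'` and therefore `F ∣ G'`.
-/

open MvPolynomial

/-- The cubic form `ξ²c₂ − (b₀² − 4a₀c₀)c₂ − a₀c₁² + b₀c₁d₀ − d₀²c₀` in the 7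
homogeneous coordinates `(a₀, b₀, c₀, c₁, c₂, d₀, ξ)` of `ℙ⁶`, with variables
indexed `0 ↦ a₀, 1 ↦ b₀, 2 ↦ c₀, 3 ↦ c₁, 4 ↦ c₂, 5 ↦ d₀, 6 ↦ ξ`. -/
noncomputable def cubicW (k : Type*) [Field k] : MvPolynomial (Fin 7) k :=
  X 6 ^ 2 * X 4 - (X 1 ^ 2 - 4 * X 0 * X 2) * X 4 - X 0 * X 3 ^ 2 +
    X 1 * X 3 * X 5 - X 5 ^ 2 * X 2

namespace Polynomial

variable {A : Type*} [CommRing A]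

theorem C_mul_X_add_C_dvd_C_pow_mul_sub (Q R : A) (g : A[X]) :
    C Q * X + C R ∣ C Q ^ g.natDegree * g - C ((g.scaleRoots Q).eval (-R)) := by
  -- `scaleRoots g Q` evaluated at `Q X` is `Q ^ N g`, so this is `a - b ∣ f a - f b`.
  have h := sub_dvd_eval_sub (C Q * X) (C (-R)) ((g.scaleRoots Q).map C)
  rwa [eval_map, eval_map, scaleRoots_eval₂_mul, eval₂_C_X, eval₂_at_apply, map_neg,
    sub_neg_eq_add] at h

theorem isRelPrime_C_of_isRelPrime_coeff [IsDomain A] {a : A} (ha : a ≠ 0) {p : A[X]} (n : ℕ)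
    (h : IsRelPrime a (p.coeff n)) : IsRelPrime (C a) p := by
  intro d hda hdp
  have hd : d = C (d.coeff 0) :=
    eq_C_of_natDegree_eq_zero (by simpa using natDegree_le_of_dvd hda (C_ne_zero.mpr ha))
  rw [hd, C_dvd_iff_dvd_coeff] at hda hdp
  rw [hd]
  exact (h (by simpa using hda 0) (hdp n)).map C

end Polynomial

namespace MvPolynomial

theorem aeval_cases_eq_eval_finSuccEquiv {R : Type*} [CommSemiring R] {n : ℕ}
    (q : MvPolynomial (Fin n) R) (p : MvPolynomial (Fin (n + 1)) R) :
    aeval (Fin.cases q X) p = (finSuccEquiv R n p).eval q := by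
  induction p using MvPolynomial.induction_on with
  | C r => simp [finSuccEquiv_apply]
  | add p p' hp hp' => rw [map_add, map_add, Polynomial.eval_add, hp, hp']
  | mul_X p i hp =>
    rw [map_mul, map_mul, Polynomial.eval_mul, hp, aeval_X]
    induction i using Fin.cases <;> simp [finSuccEquiv_X_zero, finSuccEquiv_X_succ]

theorem dvd_of_forall_eval_eq_zero_of_finSuccEquiv_eq {k : Type*} [Field k] [Infinite k] {n : ℕ}
    {F G : MvPolynomial (Fin (n + 1)) k} {Q R : MvPolynomial (Fin n) k}
    (hF : finSuccEquiv k n F = Polynomial.C Q * Polynomial.X + Polynomial.C R) (hQ : Q ≠ 0)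
    (hQR : IsRelPrime Q R) (hG : ∀ x, eval x F = 0 → eval x G = 0) : F ∣ G := by
  set g := finSuccEquiv k n G
  have hdvd := Polynomial.C_mul_X_add_C_dvd_C_pow_mul_sub Q R g
  generalize (g.scaleRoots Q).eval (-R) = s at hdvd
  -- Over a point `v` with `Q v ≠ 0` the fibre of `F = 0` is the single point `a = -R v / Q v`,
  -- where the pseudo-remainder `s` must vanish.
  have hs : s * Q = 0 := funext fun v => by
    by_cases hv : eval v Q = 0
    · simp [hv]
    obtain ⟨m, hm⟩ := hdvd
    set a := -eval v R / eval v Q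
    have hLa : eval v Q * a + eval v R = 0 := by simp only [a]; field_simp; ring
    have hGa : (g.map (eval v)).eval a = 0 := by
      rw [← eval_eq_eval_mv_eval']
      exact hG _ (by rw [eval_eq_eval_mv_eval', hF]; simpa using hLa)
    have := congrArg (fun P => (P.map (eval v)).eval a) hm
    simp only [Polynomial.map_sub, Polynomial.map_mul, Polynomial.map_pow, Polynomial.map_C,
      Polynomial.eval_sub, Polynomial.eval_mul, Polynomial.eval_pow, Polynomial.eval_C, hGa,
      mul_zero, zero_sub, Polynomial.map_add, Polynomial.map_X, Polynomial.eval_add,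
      Polynomial.eval_X, hLa, zero_mul, neg_eq_zero] at this
    simp [this]
  rw [(mul_eq_zero.mp hs).resolve_right hQ, map_zero, sub_zero, ← hF] at hdvd
  have hprime : Prime (finSuccEquiv k n F) :=
    (hF ▸ Polynomial.irreducible_C_mul_X_add_C hQ hQR).prime
  rw [← map_dvd_iff (finSuccEquiv k n)]
  refine (hprime.dvd_or_dvd hdvd).resolve_left fun hQpow => ?_
  have hle := Polynomial.natDegree_le_of_dvd (hprime.dvd_of_dvd_pow hQpow)
    (Polynomial.C_ne_zero.mpr hQ)
  rw [hF, Polynomial.natDegree_linear hQ, Polynomial.natDegree_C] at hle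
  exact Nat.not_succ_le_zero 0 hle

end MvPolynomial

section CubicW

variable {k : Type*} [Field k]

/-- Coefficient of `a₀` in `cubicW`, in the variables `b₀, c₀, c₁, c₂, d₀, ξ ↦ 0, …, 5`. -/
noncomputable def cubicWLead (k : Type*) [Field k] : MvPolynomial (Fin 6) k :=
  4 * X 1 * X 3 - X 2 ^ 2

noncomputable def cubicWConst (k : Type*) [Field k] : MvPolynomial (Fin 6) k :=
  X 5 ^ 2 * X 3 - X 0 ^ 2 * X 3 + X 0 * X 2 * X 4 - X 4 ^ 2 * X 1

theorem finSuccEquiv_cubicW :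
    finSuccEquiv k 6 (cubicW k) =
      Polynomial.C (cubicWLead k) * Polynomial.X + Polynomial.C (cubicWConst k) := by
  rw [cubicW, show (1 : Fin 7) = Fin.succ 0 from rfl, show (2 : Fin 7) = Fin.succ 1 from rfl,
    show (3 : Fin 7) = Fin.succ 2 from rfl, show (4 : Fin 7) = Fin.succ 3 from rfl,
    show (5 : Fin 7) = Fin.succ 4 from rfl, show (6 : Fin 7) = Fin.succ 5 from rfl]
  simp only [map_sub, map_add, map_mul, map_pow, map_ofNat, finSuccEquiv_X_zero,
    finSuccEquiv_X_succ, cubicWLead, cubicWConst]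
  ring

theorem cubicWLead_ne_zero : cubicWLead k ≠ 0 := fun h => by
  simpa [cubicWLead] using congrArg (eval (Pi.single 2 1)) h

theorem isHomogeneous_cubicWLead : (cubicWLead k).IsHomogeneous 2 := by
  rw [cubicWLead, ← map_ofNat C 4]
  exact (((isHomogeneous_C _ _).mul (isHomogeneous_X _ _)).mul (isHomogeneous_X _ _)).sub
    ((isHomogeneous_X _ _).pow 2)

theorem isHomogeneous_cubicWConst : (cubicWConst k).IsHomogeneous 3 := by
  have hX2 (i j : Fin 6) : (X i ^ 2 * X j : MvPolynomial (Fin 6) k).IsHomogeneous 3 :=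
    ((isHomogeneous_X _ _).pow 2).mul (isHomogeneous_X _ _)
  exact (((hX2 _ _).sub (hX2 _ _)).add
    (((isHomogeneous_X _ _).mul (isHomogeneous_X _ _)).mul (isHomogeneous_X _ _))).sub (hX2 _ _)

/-- Proved in the variable `b₀`: the lead coefficient does not involve it, while the `b₀²`
coefficient of the constant term is the prime `-c₂`, which does not divide `4c₀c₂ - c₁²`. -/
theorem isRelPrime_cubicWLead_cubicWConst : IsRelPrime (cubicWLead k) (cubicWConst k) := by
  have h1 : (1 : Fin 6) = Fin.succ 0 := rfl
  have h2 : (2 : Fin 6) = Fin.succ 1 := rfl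
  have h3 : (3 : Fin 6) = Fin.succ 2 := rfl
  have h4 : (4 : Fin 6) = Fin.succ 3 := rfl
  have h5 : (5 : Fin 6) = Fin.succ 4 := rfl
  set Q₅ : MvPolynomial (Fin 5) k := 4 * X 0 * X 2 - X 1 ^ 2
  have hQ : finSuccEquiv k 5 (cubicWLead k) = Polynomial.C Q₅ := by
    simp only [cubicWLead, h1, h2, h3, map_sub, map_mul, map_pow, map_ofNat,
      finSuccEquiv_X_succ, Q₅]
  have hR : (finSuccEquiv k 5 (cubicWConst k)).coeff 2 = -X 2 := by
    simp only [cubicWConst, h1, h2, h3, h4, h5, map_sub, map_add, map_mul, map_pow,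
      finSuccEquiv_X_succ, finSuccEquiv_X_zero]
    rw [← Polynomial.C_pow, ← Polynomial.C_pow]
    simp only [Polynomial.coeff_sub, Polynomial.coeff_add, Polynomial.coeff_mul_C,
      Polynomial.coeff_C, Polynomial.coeff_X_pow, Polynomial.coeff_X]
    simp
  have hQ₅ : Q₅ ≠ 0 := fun h => by simpa [Q₅] using congrArg (eval (Pi.single 1 1)) h
  have hX : ¬ -X 2 ∣ Q₅ := fun ⟨t, ht⟩ => by
    simpa [Q₅] using congrArg (eval (Pi.single 1 1)) ht
  refine IsRelPrime.of_map (finSuccEquiv k 5) ?_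
  rw [hQ]
  refine Polynomial.isRelPrime_C_of_isRelPrime_coeff hQ₅ 2 ?_
  rw [hR]
  exact ((X_prime.neg).irreducible.isRelPrime_iff_not_dvd.mpr hX).symm

/-- `cubicWConst` with `ξ = 1`. -/
noncomputable def cubicWConstChart (k : Type*) [Field k] : MvPolynomial (Fin 6) k :=
  X 3 - X 0 ^ 2 * X 3 + X 0 * X 2 * X 4 - X 4 ^ 2 * X 1

/-- Projection from `p` inverted: the line through `p` and `y = [0 : v₀ : ⋯ : v₄ : 1]` meets `W`
again at `[-R(y) : Q(y) y]`, where `F = a₀ Q + R`; the last variable `t` scales the affine cone. -/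
noncomputable def cubicWParam (k : Type*) [Field k] : Fin 7 → MvPolynomial (Fin 6) k :=
  ![-(X 5 * cubicWConstChart k), X 5 * cubicWLead k * X 0, X 5 * cubicWLead k * X 1,
    X 5 * cubicWLead k * X 2, X 5 * cubicWLead k * X 3, X 5 * cubicWLead k * X 4,
    X 5 * cubicWLead k]

theorem eval_cubicWParam_cubicW (v : Fin 6 → k) :
    eval (fun i => eval v (cubicWParam k i)) (cubicW k) = 0 := by
  simp only [cubicWParam, cubicWConstChart, cubicWLead, cubicW, map_sub, map_add, map_mul,
    map_pow, map_neg, eval_X, eval_ofNat, Matrix.cons_val, Matrix.cons_val_one,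
    Matrix.cons_val_zero]
  ring

theorem eq_of_eval_cubicWParam_eq {v w : Fin 6 → k} (hv : eval v (X 5 * cubicWLead k) ≠ 0)
    (h : ∀ i, eval v (cubicWParam k i) = eval w (cubicWParam k i)) : v = w := by
  have h6 : eval v (X 5 * cubicWLead k) = eval w (X 5 * cubicWLead k) := h 6
  have hlow (i : Fin 6) (hi : i ≠ 5) : v i = w i := by
    have hvw : eval v (X 5 * cubicWLead k) * v i = eval w (X 5 * cubicWLead k) * w i := by
      have := h i.succ
      fin_cases i <;> first | exact absurd rfl hi | simpa [cubicWParam] using this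
    exact mul_left_cancel₀ hv (h6 ▸ hvw)
  have hQ : eval v (cubicWLead k) = eval w (cubicWLead k) := by
    simp [cubicWLead, hlow 1, hlow 2, hlow 3]
  have h5 : v 5 = w 5 := by
    refine mul_right_cancel₀ (right_ne_zero_of_mul (by simpa using hv)) ?_
    simpa [hQ] using h6
  funext i
  by_cases hi : i = 5
  · rwa [hi]
  · exact hlow i hi

end CubicW

/-- **The cubic `W ⊂ ℙ⁶` has a double point and is rational with dense
`k`-points** (Lemma on density of `𝒰^δ`). Over an infinite field `k`:
(1) the point `p = [1:0:⋯:0]` lies on `W = {F = 0}`;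
(2) in the affine chart `a₀ = 1` centered at `p`, the dehomogenized cubic has
vanishing homogeneous components in degrees 0 and 1 and nonzero component in
degree 2, i.e. `p` is a point of multiplicity exactly 2;
(3) `W` is rational over `k`: there is a polynomial parametrization
`φ : 𝔸⁶ → W` which is injective on the complement of a proper closed subset;
(4) the `k`-points of `W` are Zariski dense: any polynomial vanishing on all
`k`-points of `W` lies in the radical of the ideal generated by `F`. -/
theorem stmt_16 {k : Type*} [Field k] [Infinite k] :
    let F := cubicW k
    let p : Fin 7 → k := fun i => if i = 0 then 1 else 0
    let G : MvPolynomial (Fin 6) k :=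
      MvPolynomial.aeval (Fin.cases 1 fun i : Fin 6 => X i) F
    eval p F = 0 ∧
      (homogeneousComponent 0 G = 0 ∧ homogeneousComponent 1 G = 0 ∧
        homogeneousComponent 2 G ≠ 0) ∧
      (∃ φ : Fin 7 → MvPolynomial (Fin 6) k,
        (∀ v : Fin 6 → k, eval (fun i => eval v (φ i)) F = 0) ∧
        ∃ h : MvPolynomial (Fin 6) k, h ≠ 0 ∧
          ∀ v w : Fin 6 → k, eval v h ≠ 0 → eval w h ≠ 0 →
            (∀ i, eval v (φ i) = eval w (φ i)) → v = w) ∧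
      (∀ G' : MvPolynomial (Fin 7) k,
        (∀ x : Fin 7 → k, eval x F = 0 → eval x G' = 0) →
          G' ∈ (Ideal.span ({F} : Set (MvPolynomial (Fin 7) k))).radical) := by
  intro F p G
  have hG (n : ℕ) : homogeneousComponent n G =
      (if n = 2 then cubicWLead k else 0) + (if n = 3 then cubicWConst k else 0) := by
    have : G = cubicWLead k + cubicWConst k := by
      simp [G, F, aeval_cases_eq_eval_finSuccEquiv, finSuccEquiv_cubicW]
    rw [this, map_add, homogeneousComponent_of_mem isHomogeneous_cubicWLead,
      homogeneousComponent_of_mem isHomogeneous_cubicWConst]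
  refine ⟨by simp [F, p, cubicW], by simp [hG, cubicWLead_ne_zero],
    ⟨cubicWParam k, eval_cubicWParam_cubicW, X 5 * cubicWLead k,
      mul_ne_zero (X_ne_zero 5) cubicWLead_ne_zero,
      fun v w hv _ h => eq_of_eval_cubicWParam_eq hv h⟩,
    fun G' hG' => Ideal.le_radical (Ideal.mem_span_singleton.mpr ?_)⟩
  exact dvd_of_forall_eval_eq_zero_of_finSuccEquiv_eq finSuccEquiv_cubicW cubicWLead_ne_zero
    isRelPrime_cubicWLead_cubicWConst hG'
end
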